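/- Let γ be a T-periodic solution of a Hamiltonian system z' = J∇Γ(z) on ℝ^{2n} (Γ C² on an open set containing the orbit), with γ'(0) ≠ 0, and let X(s) be the fundamental matrix solution of ξ' = JD²Γ(γ(s))ξ with X(0) = I. Let S be a matrix with S² = I such that γ(s) = −Sγ(T/2 − s) for all s and Sγ'(0) = −γ'(0). Let Y₀ be an orthogonal matrix, Y(s) = X(s)Y₀, W = Y₀ᵀY(T/2), and v = Y₀ᵀγ'(0)/‖γ'(0)‖. Then Wv = −v; that is, −1 is an eigenvalue of W with eigenvector v. -/

import Mathlib

open Matrix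

noncomputable section

/-- The gradient of `f : (ι → ℝ) → ℝ` as the vector of partial derivatives. -/
def grad {ι : Type*} [Fintype ι] [DecidableEq ι] (f : (ι → ℝ) → ℝ) (z : ι → ℝ) : ι → ℝ :=
  fun i => fderiv ℝ f z (Pi.single i 1)

/-- The Hessian `D²f` of `f : (ι → ℝ) → ℝ` as a matrix of second partial derivatives. -/
def hessM {ι : Type*} [Fintype ι] [DecidableEq ι] (f : (ι → ℝ) → ℝ) (z : ι → ℝ) :
    Matrix ι ι ℝ :=
  Matrix.of fun i j => fderiv ℝ (fun w => fderiv ℝ f w (Pi.single j 1)) z (Pi.single i 1)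

/-- The standard `2n × 2n` symplectic matrix `[[0, I], [-I, 0]]`. -/
def Jmat (n : ℕ) : Matrix (Fin n ⊕ Fin n) (Fin n ⊕ Fin n) ℝ :=
  Matrix.fromBlocks 0 1 (-1) 0

/-!
The velocity `γ' = J∇Γ(γ)` solves the variational equation `ξ' = J D²Γ(γ) ξ`, and so does
`s ↦ X(s) γ'(0)`; both agree at `s = 0`, so by uniqueness for linear equations with continuous
coefficients `X(s) γ'(0) = γ'(s)`. Differentiating the reversibility relation
`γ(s) = -S γ(T/2 - s)` gives `γ'(s) = S γ'(T/2 - s)`, hence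
`X(T/2) γ'(0) = γ'(T/2) = S γ'(0) = -γ'(0)`. Conjugating by the orthogonal `Y₀` and rescaling
turns this into `W v = -v`.
-/

open Set

theorem ContDiffAt.hasFDerivAt_fderiv {E F : Type*} [NormedAddCommGroup E] [NormedSpace ℝ E]
    [NormedAddCommGroup F] [NormedSpace ℝ F] {f : E → F} {x : E} (hf : ContDiffAt ℝ 2 f x) :
    HasFDerivAt (fderiv ℝ f) (fderiv ℝ (fderiv ℝ f) x) x :=
  ((hf.fderiv_right (m := 1) le_rfl).differentiableAt one_ne_zero).hasFDerivAt

section Hessian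

variable {ι : Type*} [Fintype ι] [DecidableEq ι] {Γ : (ι → ℝ) → ℝ} {z : ι → ℝ}

theorem ContDiffAt.hessM_apply (hΓ : ContDiffAt ℝ 2 Γ z) (i j : ι) :
    hessM Γ z i j = fderiv ℝ (fderiv ℝ Γ) z (Pi.single i 1) (Pi.single j 1) := by
  have h : HasFDerivAt (fun w => fderiv ℝ Γ w (Pi.single j 1))
      ((ContinuousLinearMap.apply ℝ ℝ (Pi.single j 1 : ι → ℝ)).comp
        (fderiv ℝ (fderiv ℝ Γ) z)) z :=
    (ContinuousLinearMap.apply ℝ ℝ (Pi.single j 1 : ι → ℝ)).hasFDerivAt.comp z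
      hΓ.hasFDerivAt_fderiv
  simp only [hessM, of_apply, h.fderiv]
  rfl

theorem ContDiffAt.hessM_mulVec (hΓ : ContDiffAt ℝ 2 Γ z) (d : ι → ℝ) :
    hessM Γ z *ᵥ d = fun i => fderiv ℝ (fderiv ℝ Γ) z d (Pi.single i 1) := by
  ext i
  rw [hΓ.isSymmSndFDerivAt (by simp) d]
  conv_rhs => rw [← Finset.univ_sum_single d]
  simp only [mulVec, dotProduct, hΓ.hessM_apply, map_sum]
  refine Finset.sum_congr rfl fun j _ => ?_
  rw [mul_comm, ← smul_eq_mul, ← map_smul, ← Pi.single_smul', smul_eq_mul, mul_one]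

theorem ContDiffOn.continuousOn_hessM {Ω : Set (ι → ℝ)} (hΩ : IsOpen Ω)
    (hΓ : ContDiffOn ℝ 2 Γ Ω) : ContinuousOn (hessM Γ) Ω := by
  have hD2 : ContinuousOn (fderiv ℝ (fderiv ℝ Γ)) Ω :=
    (hΓ.fderiv_of_isOpen hΩ (m := 1) le_rfl).continuousOn_fderiv_of_isOpen hΩ le_rfl
  refine continuousOn_pi.2 fun i => continuousOn_pi.2 fun j => ?_
  refine (((ContinuousLinearMap.apply ℝ ℝ (Pi.single j 1 : ι → ℝ)).continuous.comp_continuousOn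
    ((ContinuousLinearMap.apply ℝ _ (Pi.single i 1 : ι → ℝ)).continuous.comp_continuousOn
      hD2)).congr fun w hw => ?_)
  exact ((hΓ w hw).contDiffAt (hΩ.mem_nhds hw)).hessM_apply i j

theorem ContDiffAt.hasDerivAt_grad_comp {γ : ℝ → ι → ℝ} {γ' : ι → ℝ} {s : ℝ}
    (hΓ : ContDiffAt ℝ 2 Γ (γ s)) (hγ : HasDerivAt γ γ' s) :
    HasDerivAt (fun t => grad Γ (γ t)) (hessM Γ (γ s) *ᵥ γ') s := by
  rw [hΓ.hessM_mulVec, hasDerivAt_pi]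
  exact fun i => (ContinuousLinearMap.apply ℝ ℝ (Pi.single i 1 : ι → ℝ)).hasFDerivAt
    |>.comp_hasDerivAt s (hΓ.hasFDerivAt_fderiv.comp_hasDerivAt s hγ)

end Hessian

theorem eq_of_hasDerivAt_clm_apply {E : Type*} [NormedAddCommGroup E] [NormedSpace ℝ E]
    {A : ℝ → E →L[ℝ] E} (hA : Continuous A) {f g : ℝ → E}
    (hf : ∀ t, HasDerivAt f (A t (f t)) t) (hg : ∀ t, HasDerivAt g (A t (g t)) t) {t₀ : ℝ}
    (h : f t₀ = g t₀) : f = g := by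
  funext t
  obtain ⟨a, b, ht, ht₀⟩ : ∃ a b, t ∈ Ioo a b ∧ t₀ ∈ Ioo a b :=
    ⟨min t t₀ - 1, max t t₀ + 1, by grind⟩
  obtain ⟨K, hK⟩ := (isCompact_Icc (a := a) (b := b)).exists_bound_of_continuousOn hA.continuousOn
  have hLip : ∀ s ∈ Ioo a b, LipschitzOnWith K.toNNReal (A s) univ := fun s hs =>
    (ContinuousLinearMap.lipschitzWith_of_opNorm_le <|
      (hK s (Ioo_subset_Icc_self hs)).trans (Real.le_coe_toNNReal K)).lipschitzOnWith
  exact ODE_solution_unique_of_mem_Ioo hLip ht₀ (fun s _ => ⟨hf s, trivial⟩)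
    (fun s _ => ⟨hg s, trivial⟩) h ht

theorem Matrix.eq_of_hasDerivAt_mulVec {ι : Type*} [Fintype ι] [DecidableEq ι]
    {A : ℝ → Matrix ι ι ℝ} (hA : Continuous A) {f g : ℝ → ι → ℝ}
    (hf : ∀ t, HasDerivAt f (A t *ᵥ f t) t)
    (hg : ∀ t, HasDerivAt g (A t *ᵥ g t) t) {t₀ : ℝ} (h : f t₀ = g t₀) : f = g :=
  eq_of_hasDerivAt_clm_apply (A := fun t => LinearMap.toContinuousLinearMap (toLin' (A t)))
    ((LinearMap.toContinuousLinearMap.toLinearMap.comp toLin'.toLinearMap :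
      Matrix ι ι ℝ →ₗ[ℝ] (ι → ℝ) →L[ℝ] ι → ℝ).continuous_of_finiteDimensional.comp hA) hf hg h

theorem Matrix.hasDerivAt_mulVec_of_hasDerivAt_apply {m ι : Type*} [Fintype ι]
    {X : ℝ → Matrix m ι ℝ} {X' : Matrix m ι ℝ} {s : ℝ}
    (hX : ∀ i j, HasDerivAt (fun t => X t i j) (X' i j) s)
    (v : ι → ℝ) : HasDerivAt (fun t => X t *ᵥ v) (X' *ᵥ v) s :=
  hasDerivAt_pi.2 fun i => by
    simpa [mulVec, dotProduct] using
      HasDerivAt.fun_sum fun j (_ : j ∈ Finset.univ) => (hX i j).mul_const (v j)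

theorem Matrix.velocity_eq_mulVec_of_reversible {ι : Type*} [Fintype ι] {γ γ' : ℝ → ι → ℝ}
    {S : Matrix ι ι ℝ} {c : ℝ} (hγ : ∀ s, HasDerivAt γ (γ' s) s)
    (hrev : ∀ s, γ s = -(S *ᵥ γ (c - s))) (s : ℝ) : γ' s = S *ᵥ γ' (c - s) := by
  have hreflect : HasDerivAt (fun t => γ (c - t)) ((-1 : ℝ) • γ' (c - s)) s :=
    (hγ (c - s)).scomp s ((hasDerivAt_id s).const_sub c)
  have h := ((mulVecLin S).toContinuousLinearMap.hasFDerivAt.comp_hasDerivAt s hreflect).neg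
  refine (hγ s).unique (h.congr_of_eventuallyEq (.of_forall hrev) |>.congr_deriv ?_)
  simp [mulVec_neg]

theorem Matrix.transpose_mul_mul_mulVec_transpose_mulVec {ι R : Type*} [Fintype ι]
    [DecidableEq ι] [CommRing R] {M Y : Matrix ι ι R} (hY : Yᵀ * Y = 1)
    {u : ι → R} (hu : M *ᵥ u = -u) :
    (Yᵀ * (M * Y)) *ᵥ (Yᵀ *ᵥ u) = -(Yᵀ *ᵥ u) := by
  rw [mulVec_mulVec, mul_assoc, mul_assoc, mul_eq_one_comm.mp hY, mul_one, ← mulVec_mulVec, hu,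
    mulVec_neg]

theorem minus_one_eigenvalue_of_W_general (n : ℕ)
    (Ω : Set ((Fin n ⊕ Fin n) → ℝ)) (hΩ : IsOpen Ω)
    (Γ : ((Fin n ⊕ Fin n) → ℝ) → ℝ) (hΓ : ContDiffOn ℝ 2 Γ Ω)
    (T : ℝ)
    (γ : ℝ → (Fin n ⊕ Fin n) → ℝ) (hmem : ∀ s, γ s ∈ Ω)
    (hsol : ∀ s : ℝ, HasDerivAt γ ((Jmat n).mulVec (grad Γ (γ s))) s)
    (X : ℝ → Matrix (Fin n ⊕ Fin n) (Fin n ⊕ Fin n) ℝ)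
    (hX0 : X 0 = 1)
    (hX : ∀ (s : ℝ) (i j : Fin n ⊕ Fin n),
      HasDerivAt (fun t => X t i j) ((Jmat n * hessM Γ (γ s) * X s) i j) s)
    (S : Matrix (Fin n ⊕ Fin n) (Fin n ⊕ Fin n) ℝ)
    (hsymm : ∀ s : ℝ, γ s = -S.mulVec (γ (T / 2 - s)))
    (hSd : S.mulVec ((Jmat n).mulVec (grad Γ (γ 0))) = -((Jmat n).mulVec (grad Γ (γ 0))))
    (Y₀ : Matrix (Fin n ⊕ Fin n) (Fin n ⊕ Fin n) ℝ)
    (hY₀ : Y₀ᵀ * Y₀ = 1) :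
    (Y₀ᵀ * (X (T / 2) * Y₀)).mulVec
        ((Real.sqrt (∑ i, ((Jmat n).mulVec (grad Γ (γ 0)) i) ^ 2))⁻¹ •
          Y₀ᵀ.mulVec ((Jmat n).mulVec (grad Γ (γ 0)))) =
      -((Real.sqrt (∑ i, ((Jmat n).mulVec (grad Γ (γ 0)) i) ^ 2))⁻¹ •
          Y₀ᵀ.mulVec ((Jmat n).mulVec (grad Γ (γ 0)))) := by
  set γ' : ℝ → (Fin n ⊕ Fin n) → ℝ := fun s => Jmat n *ᵥ grad Γ (γ s)
  have hγ' : ∀ s, HasDerivAt γ' ((Jmat n * hessM Γ (γ s)) *ᵥ γ' s) s := fun s => by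
    simpa [Function.comp_def, ← mulVec_mulVec] using
      (mulVecLin (Jmat n)).toContinuousLinearMap.hasFDerivAt.comp_hasDerivAt s <|
        (hΓ.contDiffAt (hΩ.mem_nhds (hmem s))).hasDerivAt_grad_comp (hsol s)
  have hA : Continuous fun s => Jmat n * hessM Γ (γ s) :=
    continuous_const.matrix_mul <| (hΓ.continuousOn_hessM hΩ).comp_continuous
      (continuous_iff_continuousAt.2 fun s => (hsol s).continuousAt) hmem
  have hflow : (fun s => X s *ᵥ γ' 0) = γ' :=
    eq_of_hasDerivAt_mulVec hA (fun s => by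
      simpa [mulVec_mulVec] using hasDerivAt_mulVec_of_hasDerivAt_apply (hX s) (γ' 0))
      hγ' (t₀ := 0) (by simp [hX0])
  have hhalf : X (T / 2) *ᵥ γ' 0 = -γ' 0 := by
    rw [congrFun hflow, velocity_eq_mulVec_of_reversible (γ' := γ') hsol hsymm, sub_self, hSd]
  rw [mulVec_smul, transpose_mul_mul_mulVec_transpose_mulVec hY₀ hhalf, smul_neg]

/-- For a `T`-periodic solution `γ` of `z' = J∇Γ(z)` with `γ'(0) ≠ 0`,
a matrix `S` with `S² = I`, `γ(s) = −Sγ(T/2 − s)` and `Sγ'(0) = −γ'(0)`, and an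
orthogonal `Y₀`, the matrix `W = Y₀ᵀ Y(T/2) = Y₀ᵀ X(T/2) Y₀` satisfies
`Wv = −v`, where `v = Y₀ᵀγ'(0)/‖γ'(0)‖` (with the Euclidean norm); that is,
`−1` is an eigenvalue of `W` with eigenvector `v`.
Here `γ'(s) = J∇Γ(γ(s))` is the velocity of the orbit. -/
theorem minus_one_eigenvalue_of_W (n : ℕ)
    (Ω : Set ((Fin n ⊕ Fin n) → ℝ)) (hΩ : IsOpen Ω)
    (Γ : ((Fin n ⊕ Fin n) → ℝ) → ℝ) (hΓ : ContDiffOn ℝ 2 Γ Ω)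
    (T : ℝ) (hT : 0 < T)
    (γ : ℝ → (Fin n ⊕ Fin n) → ℝ) (hmem : ∀ s, γ s ∈ Ω)
    (hsol : ∀ s : ℝ, HasDerivAt γ ((Jmat n).mulVec (grad Γ (γ s))) s)
    (hper : Function.Periodic γ T)
    (hne : (Jmat n).mulVec (grad Γ (γ 0)) ≠ 0)
    (X : ℝ → Matrix (Fin n ⊕ Fin n) (Fin n ⊕ Fin n) ℝ)
    (hX0 : X 0 = 1)
    (hX : ∀ (s : ℝ) (i j : Fin n ⊕ Fin n),
      HasDerivAt (fun t => X t i j) ((Jmat n * hessM Γ (γ s) * X s) i j) s)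
    (S : Matrix (Fin n ⊕ Fin n) (Fin n ⊕ Fin n) ℝ)
    (hS2 : S * S = 1)
    (hsymm : ∀ s : ℝ, γ s = -S.mulVec (γ (T / 2 - s)))
    (hSd : S.mulVec ((Jmat n).mulVec (grad Γ (γ 0))) = -((Jmat n).mulVec (grad Γ (γ 0))))
    (Y₀ : Matrix (Fin n ⊕ Fin n) (Fin n ⊕ Fin n) ℝ)
    (hY₀ : Y₀ᵀ * Y₀ = 1) :
    (Y₀ᵀ * (X (T / 2) * Y₀)).mulVec
        ((Real.sqrt (∑ i, ((Jmat n).mulVec (grad Γ (γ 0)) i) ^ 2))⁻¹ •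
          Y₀ᵀ.mulVec ((Jmat n).mulVec (grad Γ (γ 0)))) =
      -((Real.sqrt (∑ i, ((Jmat n).mulVec (grad Γ (γ 0)) i) ^ 2))⁻¹ •
          Y₀ᵀ.mulVec ((Jmat n).mulVec (grad Γ (γ 0)))) :=
  minus_one_eigenvalue_of_W_general n Ω hΩ Γ hΓ T γ hmem hsol X hX0 hX S hsymm hSd Y₀ hY₀
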